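/- arXiv:2405.06689 — 4 statements merged into one kernel-verified Lean document; each statement's English description precedes it below -/
import Mathlib

section
/- Consider an SSG with the best-response follower. Let f, f' be leader policies and Q_A^{f'†}(s, f) := r_A(s, f(s), R_B^*(s,f)) + γ_A Σ_{s'} p(s'|s, f(s), R_B^*(s,f)) V_A^{f'†}(s'). Then Q_A^{f'†}(s, f) = V_A^{f'†}(s) for all s ∈ S if and only if V_A^{f†}(s) = V_A^{f'†}(s) for all s ∈ S. -/
open Finset

/-- A probability distribution on a finite type, represented as a function. -/
def IsDist {α : Type*} [Fintype α] (d : α → ℝ) : Prop :=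
  (∀ x, 0 ≤ d x) ∧ ∑ x, d x = 1

/-- A (stationary stochastic) policy: a distribution over actions at each state. -/
def IsPol {S α : Type*} [Fintype α] (f : S → α → ℝ) : Prop :=
  ∀ s, IsDist (f s)

/-- A deterministic policy viewed as a stochastic one. -/
noncomputable def det {S α : Type*} [DecidableEq α] (g : S → α) : S → α → ℝ :=
  fun s a => if a = g s then 1 else 0

/-- `V` is the value function of the policy pair `(f, g)` for reward `r`,
discount `γ` and transition kernel `p`, i.e. `V` satisfies the Bellman
expectation equation (whose solution is unique since `γ < 1`). -/
def IsValue {S A B : Type*} [Fintype S] [Fintype A] [Fintype B]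
    (p : S → A → B → S → ℝ) (r : S → A → B → ℝ) (γ : ℝ)
    (f : S → A → ℝ) (g : S → B → ℝ) (V : S → ℝ) : Prop :=
  ∀ s, V s = ∑ a, ∑ b, f s a * g s b * (r s a b + γ * ∑ s', p s a b s' * V s')

/-- Weak dominance `v ≽ w`. -/
def DomGE {S : Type*} (v w : S → ℝ) : Prop := ∀ s, w s ≤ v s

/-- Strict dominance `v ≻ w`. -/
def SDom {S : Type*} (v w : S → ℝ) : Prop := DomGE v w ∧ v ≠ w

/-- A two-player stochastic Stackelberg game together with its value functions:
finite state/action spaces, transition kernel, bounded rewards, discount rates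
in `[0,1)`, and for every pair of (stochastic) policies the associated value
functions `VA`, `VB`, characterized as the (unique) solutions of the Bellman
expectation equations. -/
structure SSGVal (S A B : Type*) [Fintype S] [Fintype A] [Fintype B] where
  p : S → A → B → S → ℝ
  hp : ∀ s a b, IsDist (p s a b)
  rA : S → A → B → ℝ
  rB : S → A → B → ℝ
  gA : ℝ
  gB : ℝ
  hgA0 : 0 ≤ gA
  hgA1 : gA < 1
  hgB0 : 0 ≤ gB
  hgB1 : gB < 1
  VA : (S → A → ℝ) → (S → B → ℝ) → S → ℝ
  VB : (S → A → ℝ) → (S → B → ℝ) → S → ℝ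
  hVA : ∀ f g, IsPol f → IsPol g → IsValue p rA gA f g (VA f g)
  hVB : ∀ f g, IsPol f → IsPol g → IsValue p rB gB f g (VB f g)

/-- An SSG with a best-response follower: `Rstar f` is the unique deterministic
best response of the follower to the leader policy `f`. -/
structure Setup (S A B : Type*) [Fintype S] [Fintype A] [Fintype B] [DecidableEq B]
    extends SSGVal S A B where
  Rstar : (S → A → ℝ) → S → B
  hRstar : ∀ f, IsPol f → ∀ g, IsPol g → ∀ s, VB f g s ≤ VB f (det (Rstar f)) s
  hRstarU : ∀ f, IsPol f → ∀ h : S → B,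
      (∀ g, IsPol g → ∀ s, VB f g s ≤ VB f (det h) s) → h = Rstar f

namespace Setup

variable {S A B : Type*} [Fintype S] [Fintype A] [Fintype B] [DecidableEq B]

/-- `V_A^{f†}`: the leader's value under the best-response follower. -/
noncomputable def VAdag (M : Setup S A B) (f : S → A → ℝ) : S → ℝ :=
  M.VA f (det (M.Rstar f))

/-- Marginalized leader reward `r_A(s, f(s), b)`. -/
def rAf (M : Setup S A B) (f : S → A → ℝ) (s : S) (b : B) : ℝ :=
  ∑ a, f s a * M.rA s a b

/-- Marginalized transition `p(s' | s, f(s), b)`. -/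
def pf (M : Setup S A B) (f : S → A → ℝ) (s : S) (b : B) (s' : S) : ℝ :=
  ∑ a, f s a * M.p s a b s'

/-- `Q_A^{f'†}(s, f)`. -/
noncomputable def Q (M : Setup S A B) (f' f : S → A → ℝ) (s : S) : ℝ :=
  M.rAf f s (M.Rstar f s) + M.gA * ∑ s', M.pf f s (M.Rstar f s) s' * M.VAdag f' s'

/-- `𝒱`: the set of reachable leader value functions under the best-response follower. -/
def Vset (M : Setup S A B) : Set (S → ℝ) := {v | ∃ f, IsPol f ∧ v = M.VAdag f}

/-- `𝒫𝒱`: the set of Pareto-optimal value functions in `cl 𝒱`. -/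
def PV (M : Setup S A B) : Set (S → ℝ) :=
  {v | v ∈ closure M.Vset ∧ ¬ ∃ w ∈ closure M.Vset, SDom w v}

/-- `W_≽(f')`: policies satisfying the policy-improvement condition from `f'`. -/
noncomputable def Wge (M : Setup S A B) (f' : S → A → ℝ) : Set (S → A → ℝ) :=
  {f | IsPol f ∧ ∀ s, M.VAdag f' s ≤ M.Q f' f s}

/-- `W_{1-ε}(f')`: ε-optimal improving policies for the scalarization `L`. -/
noncomputable def Weps (M : Setup S A B) (L : (S → ℝ) → ℝ) (ε : ℝ) (f' : S → A → ℝ) :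
    Set (S → A → ℝ) :=
  {f | f ∈ M.Wge f' ∧
    (1 - ε) * sSup ((fun h => L (M.Q f' h) - L (M.VAdag f')) '' M.Wge f')
      ≤ L (M.Q f' f) - L (M.VAdag f')}

end Setup

lemma det_isPol {S α : Type*} [Fintype α] [DecidableEq α] (g : S → α) :
    IsPol (det g) := by
  intro s
  constructor
  · intro x; unfold det; split <;> norm_num
  · simp [det]

/-- Uniqueness of the fixed point of a discounted Bellman-type operator. -/
lemma bellman_unique {S : Type*} [Fintype S] [Nonempty S]
    (P : S → S → ℝ) (hP0 : ∀ s s', 0 ≤ P s s') (hP1 : ∀ s, ∑ s', P s s' = 1)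
    (γ : ℝ) (hγ0 : 0 ≤ γ) (hγ1 : γ < 1) (c v w : S → ℝ)
    (hv : ∀ s, v s = c s + γ * ∑ s', P s s' * v s')
    (hw : ∀ s, w s = c s + γ * ∑ s', P s s' * w s') :
    ∀ s, v s = w s := by
  set d : S → ℝ := fun s => |v s - w s| with hd
  obtain ⟨s0, -, hs0⟩ := Finset.exists_max_image Finset.univ d ⟨Classical.arbitrary S, Finset.mem_univ _⟩
  have key : d s0 ≤ γ * d s0 := by
    have h1 : v s0 - w s0 = γ * ∑ s', P s0 s' * (v s' - w s') := by
      have e : ∑ s', P s0 s' * (v s' - w s')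
          = (∑ s', P s0 s' * v s') - ∑ s', P s0 s' * w s' := by
        rw [← Finset.sum_sub_distrib]
        apply Finset.sum_congr rfl
        intro s' _
        ring
      rw [hv s0, hw s0, e]; ring
    calc d s0 = |γ * ∑ s', P s0 s' * (v s' - w s')| := by rw [hd]; simp only [h1]
      _ = γ * |∑ s', P s0 s' * (v s' - w s')| := by
          rw [abs_mul, abs_of_nonneg hγ0]
      _ ≤ γ * ∑ s', P s0 s' * d s' := by
          apply mul_le_mul_of_nonneg_left _ hγ0
          refine (Finset.abs_sum_le_sum_abs _ _).trans ?_
          apply Finset.sum_le_sum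
          intro s' _
          rw [abs_mul, abs_of_nonneg (hP0 s0 s')]
      _ ≤ γ * ∑ s', P s0 s' * d s0 := by
          apply mul_le_mul_of_nonneg_left _ hγ0
          apply Finset.sum_le_sum
          intro s' _
          exact mul_le_mul_of_nonneg_left (hs0 s' (Finset.mem_univ _)) (hP0 s0 s')
      _ = γ * d s0 := by rw [← Finset.sum_mul, hP1, one_mul]
  have hd0 : d s0 ≤ 0 := by nlinarith [abs_nonneg (v s0 - w s0)]
  intro s
  have : d s ≤ 0 := le_trans (hs0 s (Finset.mem_univ _)) hd0
  have := abs_nonneg (v s - w s)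
  have : d s = 0 := le_antisymm ‹d s ≤ 0› ‹0 ≤ d s›
  have := abs_eq_zero.mp this
  linarith

/-- The Bellman equation for `VAdag` in marginalized form. -/
lemma VAdag_bellman {S A B : Type*} [Fintype S] [Fintype A] [Fintype B] [DecidableEq B]
    (M : Setup S A B) (f : S → A → ℝ) (hf : IsPol f) (s : S) :
    M.VAdag f s = M.rAf f s (M.Rstar f s)
      + M.gA * ∑ s', M.pf f s (M.Rstar f s) s' * M.VAdag f s' := by
  have h := M.hVA f (det (M.Rstar f)) hf (det_isPol _) s
  unfold Setup.VAdag
  rw [h]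
  have hcoll : ∀ a : A, ∑ b, f s a * det (M.Rstar f) s b *
      (M.rA s a b + M.gA * ∑ s', M.p s a b s' * M.VA f (det (M.Rstar f)) s') =
      f s a * (M.rA s a (M.Rstar f s)
        + M.gA * ∑ s', M.p s a (M.Rstar f s) s' * M.VA f (det (M.Rstar f)) s') := by
    intro a
    rw [Finset.sum_eq_single (M.Rstar f s)]
    · simp [det]
    · intro b _ hb; simp [det, hb]
    · intro hb; exact absurd (Finset.mem_univ _) hb
  rw [Finset.sum_congr rfl (fun a _ => hcoll a)]
  unfold Setup.rAf Setup.pf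
  set b := M.Rstar f s
  set V := M.VA f (det (M.Rstar f))
  calc ∑ a, f s a * (M.rA s a b + M.gA * ∑ s', M.p s a b s' * V s')
      = ∑ a, (f s a * M.rA s a b + M.gA * ∑ s', f s a * M.p s a b s' * V s') := by
        apply Finset.sum_congr rfl; intro a _
        simp only [mul_add, Finset.mul_sum]
        congr 1
        apply Finset.sum_congr rfl; intro s' _
        ring
    _ = (∑ a, f s a * M.rA s a b) + M.gA * ∑ s', (∑ a, f s a * M.p s a b s') * V s' := by
        rw [Finset.sum_add_distrib, ← Finset.mul_sum, Finset.sum_comm]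
        congr 2
        apply Finset.sum_congr rfl; intro s' _
        rw [Finset.sum_mul]

lemma pf_dist {S A B : Type*} [Fintype S] [Fintype A] [Fintype B] [DecidableEq B]
    (M : Setup S A B) (f : S → A → ℝ) (hf : IsPol f) (s : S) (b : B) :
    (∀ s', 0 ≤ M.pf f s b s') ∧ ∑ s', M.pf f s b s' = 1 := by
  constructor
  · intro s'
    apply Finset.sum_nonneg
    intro a _
    exact mul_nonneg ((hf s).1 a) ((M.hp s a b).1 s')
  · unfold Setup.pf
    rw [Finset.sum_comm]
    have : ∀ a : A, ∑ s', f s a * M.p s a b s' = f s a := by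
      intro a; rw [← Finset.mul_sum, (M.hp s a b).2, mul_one]
    rw [Finset.sum_congr rfl (fun a _ => this a)]
    exact (hf s).2

theorem stmt9 {S A B : Type*} [Fintype S] [Fintype A] [Fintype B]
    [Nonempty S] [Nonempty A] [Nonempty B] [DecidableEq B]
    (M : Setup S A B)
    (f f' : S → A → ℝ) (hf : IsPol f) (hf' : IsPol f') :
    (∀ s, M.Q f' f s = M.VAdag f' s) ↔ (∀ s, M.VAdag f s = M.VAdag f' s) := by
  constructor
  · intro h
    -- VAdag f' is a fixed point of the (f, Rstar f) Bellman operator; so is VAdag f.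
    refine bellman_unique (fun s => M.pf f s (M.Rstar f s))
      (fun s => (pf_dist M f hf s _).1) (fun s => (pf_dist M f hf s _).2)
      M.gA M.hgA0 M.hgA1 (fun s => M.rAf f s (M.Rstar f s)) _ _
      (fun s => VAdag_bellman M f hf s) (fun s => ?_)
    rw [← h s]
    rfl
  · intro h s
    have := VAdag_bellman M f hf s
    unfold Setup.Q
    rw [← h s]
    rw [this]
    congr 1
    rw [Finset.mul_sum, Finset.mul_sum]
    apply Finset.sum_congr rfl
    intro s' _
    rw [h s']
end

section
/- Consider an SSG with the best-response follower. Let f, f' be leader policies, Q_A^{f'†}(s, f) := r_A(s, f(s), R_B^*(s,f)) + γ_A Σ_{s'} p(s'|s, f(s), R_B^*(s,f)) V_A^{f'†}(s'), and δ(f, f') := max_{s∈S} Σ_{s'} p(s'|s, f(s), R_B^*(s,f)) ( Q_A^{f'†}(s', f) − V_A^{f'†}(s') ). Then for all s ∈ S, Q_A^{f'†}(s, f) ≥ V_A^{f†}(s) − (γ_A / (1 − γ_A)) · δ(f, f'). -/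
open Finset

section Aux

variable {S A B : Type*} [Fintype S] [Fintype A] [Fintype B] [DecidableEq B]

lemma aux_det_pol (g : S → B) : IsPol (det g) := by
  intro s
  constructor
  · intro b; simp only [det]; split <;> norm_num
  · simp [det]

lemma aux_bell (M : Setup S A B) (f : S → A → ℝ) (g : S → B) (γ : ℝ) (V : S → ℝ) (s : S) :
    ∑ a, ∑ b, f s a * det g s b * (M.rA s a b + γ * ∑ s', M.p s a b s' * V s')
      = M.rAf f s (g s) + γ * ∑ s', M.pf f s (g s) s' * V s' := by
  have h1 : ∀ a, ∑ b, f s a * det g s b * (M.rA s a b + γ * ∑ s', M.p s a b s' * V s')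
      = f s a * (M.rA s a (g s) + γ * ∑ s', M.p s a (g s) s' * V s') := by
    intro a
    simp [det, mul_ite, ite_mul]
  rw [Finset.sum_congr rfl (fun a _ => h1 a)]
  simp only [Setup.rAf, Setup.pf, mul_add, Finset.sum_add_distrib, Finset.mul_sum,
    Finset.sum_mul]
  congr 1
  rw [Finset.sum_comm]
  apply Finset.sum_congr rfl
  intro a _
  apply Finset.sum_congr rfl
  intro s' _
  ring

lemma aux_pf_nonneg (M : Setup S A B) (f : S → A → ℝ) (hf : IsPol f) (s : S) (b : B) (s' : S) :
    0 ≤ M.pf f s b s' := by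
  apply Finset.sum_nonneg
  intro a _
  exact mul_nonneg ((hf s).1 a) ((M.hp s a b).1 s')

lemma aux_pf_sum (M : Setup S A B) (f : S → A → ℝ) (hf : IsPol f) (s : S) (b : B) :
    ∑ s', M.pf f s b s' = 1 := by
  simp only [Setup.pf]
  rw [Finset.sum_comm]
  have : ∀ a, ∑ s', f s a * M.p s a b s' = f s a := by
    intro a
    rw [← Finset.mul_sum, (M.hp s a b).2, mul_one]
  rw [Finset.sum_congr rfl (fun a _ => this a), (hf s).2]

end Aux

theorem stmt13 {S A B : Type*} [Fintype S] [Fintype A] [Fintype B]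
    [Nonempty S] [Nonempty A] [Nonempty B] [DecidableEq B]
    (M : Setup S A B)
    (f f' : S → A → ℝ) (hf : IsPol f) (hf' : IsPol f')
    (δ : ℝ)
    (hδ : δ = ⨆ s, ∑ s', M.pf f s (M.Rstar f s) s' * (M.Q f' f s' - M.VAdag f' s')) :
    ∀ s, M.VAdag f s - M.gA / (1 - M.gA) * δ ≤ M.Q f' f s := by
  set g := M.Rstar f with hg
  have hgp : IsPol (det g) := aux_det_pol g
  set V : S → ℝ := M.VAdag f with hVdef
  set W : S → ℝ := M.VAdag f' with hWdef
  set e : S → ℝ := fun t => V t - M.Q f' f t with hedef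
  have hQ : ∀ t, M.Q f' f t
      = M.rAf f t (g t) + M.gA * ∑ s', M.pf f t (g t) s' * W s' := fun t => rfl
  have hVb : ∀ t, V t = M.rAf f t (g t) + M.gA * ∑ s', M.pf f t (g t) s' * V s' := by
    intro t
    have h := M.hVA f (det g) hf hgp t
    have : V t = ∑ a, ∑ b, f t a * det g t b
        * (M.rA t a b + M.gA * ∑ s', M.p t a b s' * V s') := h
    rw [this, aux_bell]
  have he : ∀ t, e t = M.gA * ∑ s', M.pf f t (g t) s' * (V s' - W s') := by
    intro t
    have : e t = V t - M.Q f' f t := rfl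
    rw [this, hVb t, hQ t]
    rw [show (∑ s', M.pf f t (g t) s' * (V s' - W s'))
        = (∑ s', M.pf f t (g t) s' * V s') - ∑ s', M.pf f t (g t) s' * W s' by
      rw [← Finset.sum_sub_distrib]; exact Finset.sum_congr rfl (fun s' _ => by ring)]
    ring
  obtain ⟨s₀, hs₀⟩ := Finite.exists_max e
  have hδ' : ∀ t, ∑ s', M.pf f t (g t) s' * (M.Q f' f s' - W s') ≤ δ := by
    intro t
    rw [hδ]
    exact le_ciSup (f := fun t => ∑ s', M.pf f t (g t) s' * (M.Q f' f s' - W s'))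
      (Set.Finite.bddAbove (Set.finite_range _)) t
  have hsum : ∀ t, ∑ s', M.pf f t (g t) s' * (V s' - W s')
      ≤ e s₀ + ∑ s', M.pf f t (g t) s' * (M.Q f' f s' - W s') := by
    intro t
    have h1 : ∑ s', M.pf f t (g t) s' * (V s' - W s')
        = ∑ s', (M.pf f t (g t) s' * e s' + M.pf f t (g t) s' * (M.Q f' f s' - W s')) := by
      apply Finset.sum_congr rfl
      intro s' _
      have : V s' - W s' = e s' + (M.Q f' f s' - W s') := by
        simp only [hedef]; ring
      rw [this]; ring
    rw [h1, Finset.sum_add_distrib]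
    have h2 : ∑ s', M.pf f t (g t) s' * e s' ≤ e s₀ := by
      calc ∑ s', M.pf f t (g t) s' * e s'
          ≤ ∑ s', M.pf f t (g t) s' * e s₀ := by
            apply Finset.sum_le_sum
            intro s' _
            exact mul_le_mul_of_nonneg_left (hs₀ s') (aux_pf_nonneg M f hf t (g t) s')
        _ = e s₀ := by rw [← Finset.sum_mul, aux_pf_sum M f hf, one_mul]
    linarith
  have hkey : ∀ t, e t ≤ M.gA * (e s₀ + δ) := by
    intro t
    rw [he t]
    apply mul_le_mul_of_nonneg_left _ M.hgA0
    calc ∑ s', M.pf f t (g t) s' * (V s' - W s')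
        ≤ e s₀ + ∑ s', M.pf f t (g t) s' * (M.Q f' f s' - W s') := hsum t
      _ ≤ e s₀ + δ := by linarith [hδ' t]
  have h1γ : 0 < 1 - M.gA := by linarith [M.hgA1]
  have hes₀ : e s₀ ≤ M.gA / (1 - M.gA) * δ := by
    have h := hkey s₀
    rw [div_mul_eq_mul_div, le_div_iff₀ h1γ]
    nlinarith
  intro s
  have : e s ≤ M.gA / (1 - M.gA) * δ := le_trans (hs₀ s) hes₀
  have heq : e s = V s - M.Q f' f s := rfl
  linarith [heq ▸ this]
end

section
/- Consider an SSG with the best-response follower in which the leader is myopic, γ_A = 0. Let L be a Pareto-compliant scalarization and ε ∈ [0,1). Let f_0 be any leader policy, let {f_t} satisfy f_{t+1} ∈ W_{1−ε}(f_t) for all t ≥ 0, set v_t := V_A^{f_t†}, and let v_∞ := lim_{t→∞} v_t (which exists). Then v_∞ ∈ 𝒫𝒱, i.e., v_∞ is a Pareto-optimal value function. -/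
/-!
Uniqueness of the follower's best response makes `Rstar` constant on the set of leader policies:
its finitely many fibres are closed, because `V_B^{fg} = (1 - γ_B P_{fg})⁻¹ r_{fg}` depends
continuously on `f`, and the set of policies is connected. For a myopic leader this makes
`V_A^{f†}` linear in `f`, `Q_A^{f'†}(·, f) = V_A^{f†}`, and `𝒱` compact. The values `v_t` increase
to `v_∞`; if some `V_A^{h†}` strictly dominated `v_∞`, then `h` would be an admissible improvement
at every step, so step `t` gains at least `(1 - ε) (L[V_A^{h†}] - L[v_t])`, and letting `t → ∞`
gives `L[V_A^{h†}] ≤ L[v_∞]`, against Pareto compliance.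
-/

open Finset

open Filter Topology
open scoped Matrix

namespace Matrix

variable {n : Type*} [Fintype n] [DecidableEq n] {P : Matrix n n ℝ}

theorem norm_mulVec_le_of_mem_rowStochastic (hP : P ∈ rowStochastic ℝ n) (x : n → ℝ) :
    ‖P *ᵥ x‖ ≤ ‖x‖ := by
  refine (pi_norm_le_iff_of_nonneg (norm_nonneg x)).2 fun i => ?_
  calc ‖(P *ᵥ x) i‖ ≤ ∑ j, P i j * ‖x‖ := by
        refine (norm_sum_le _ _).trans (sum_le_sum fun j _ => ?_)
        rw [norm_mul, Real.norm_of_nonneg (nonneg_of_mem_rowStochastic hP)]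
        exact mul_le_mul_of_nonneg_left (norm_le_pi_norm x j) (nonneg_of_mem_rowStochastic hP)
    _ = ‖x‖ := by rw [← sum_mul, sum_row_of_mem_rowStochastic hP, one_mul]

theorem isUnit_one_sub_smul_of_mem_rowStochastic (hP : P ∈ rowStochastic ℝ n) {γ : ℝ}
    (hγ0 : 0 ≤ γ) (hγ1 : γ < 1) : IsUnit (1 - γ • P) := by
  rw [isUnit_iff_isUnit_det, isUnit_iff_ne_zero, ne_eq, ← exists_mulVec_eq_zero_iff]
  rintro ⟨x, hx0, hx⟩
  rw [sub_mulVec, one_mulVec, smul_mulVec, sub_eq_zero] at hx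
  have hle : ‖x‖ ≤ γ * ‖x‖ := by
    calc ‖x‖ = γ * ‖P *ᵥ x‖ := by
          rw [← Real.norm_of_nonneg hγ0, ← norm_smul]; exact congrArg _ hx
      _ ≤ γ * ‖x‖ := mul_le_mul_of_nonneg_left (norm_mulVec_le_of_mem_rowStochastic hP x) hγ0
  exact hx0 (norm_le_zero_iff.1 (by nlinarith [norm_nonneg x]))

end Matrix

theorem PreconnectedSpace.constant_of_isClosed_preimage_singleton {X Y : Type*}
    [TopologicalSpace X] [PreconnectedSpace X] [Finite Y] {φ : X → Y}
    (hφ : ∀ y, IsClosed (φ ⁻¹' {y})) (x x' : X) : φ x = φ x' := by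
  let : TopologicalSpace Y := ⊥
  have : DiscreteTopology Y := ⟨rfl⟩
  refine PreconnectedSpace.constant ‹_› (continuous_discrete_rng.2 fun y => ?_)
  rw [← isClosed_compl_iff, ← Set.preimage_compl, ← Set.biUnion_preimage_singleton]
  exact (Set.toFinite _).isClosed_biUnion fun y' _ => hφ y'

theorem not_sdom_of_tendsto_of_improvement {S : Type*} {L : (S → ℝ) → ℝ} (hLc : Continuous L)
    (hLp : ∀ v w : S → ℝ, SDom v w → L w < L v) {ε : ℝ} (hε : ε < 1) {v : ℕ → S → ℝ}
    (hv : Monotone v) {vinf w : S → ℝ} (hlim : Tendsto v atTop (𝓝 vinf))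
    (hstep : ∀ t, v t ≤ w → (1 - ε) * (L w - L (v t)) ≤ L (v (t + 1)) - L (v t)) :
    ¬ SDom w vinf := by
  intro hw
  have hLv : Tendsto (fun t => L (v t)) atTop (𝓝 (L vinf)) := (hLc.tendsto vinf).comp hlim
  have hgap : (1 - ε) * (L w - L vinf) ≤ 0 := by
    refine le_of_tendsto_of_tendsto' ((tendsto_const_nhds.sub hLv).const_mul _) ?_
      fun t => hstep t ((hv.ge_of_tendsto hlim t).trans hw.1)
    simpa using (hLv.comp (tendsto_add_atTop_nat 1)).sub hLv
  exact hgap.not_gt (mul_pos (sub_pos.2 hε) (sub_pos.2 (hLp w vinf hw)))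

section Policies

variable {S α : Type*} [Fintype α]

theorem setOf_isPol_eq_pi : {f : S → α → ℝ | IsPol f} = Set.univ.pi fun _ => stdSimplex ℝ α := by
  ext f
  simp [IsPol, IsDist, stdSimplex, Set.mem_pi]

theorem isCompact_setOf_isPol : IsCompact {f : S → α → ℝ | IsPol f} := by
  rw [setOf_isPol_eq_pi]
  exact isCompact_univ_pi fun _ => isCompact_stdSimplex ℝ α

theorem convex_setOf_isPol : Convex ℝ {f : S → α → ℝ | IsPol f} := by
  rw [setOf_isPol_eq_pi]
  exact convex_pi fun _ _ => convex_stdSimplex ℝ α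

theorem isPol_det [DecidableEq α] (g : S → α) : IsPol (det g) := fun s =>
  ⟨fun a => by unfold det; split <;> norm_num, by simp [det]⟩

end Policies

section Bellman

variable {S A B : Type*} [Fintype S] [Fintype A] [Fintype B]
  {p : S → A → B → S → ℝ} {r : S → A → B → ℝ} {γ : ℝ} {f : S → A → ℝ} {g : S → B → ℝ}

def transMatrix (p : S → A → B → S → ℝ) (f : S → A → ℝ) (g : S → B → ℝ) : Matrix S S ℝ :=
  Matrix.of fun s s' => ∑ a, ∑ b, f s a * g s b * p s a b s'

def expectedReward (r : S → A → B → ℝ) (f : S → A → ℝ) (g : S → B → ℝ) : S → ℝ :=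
  fun s => ∑ a, ∑ b, f s a * g s b * r s a b

theorem isValue_iff {V : S → ℝ} :
    IsValue p r γ f g V ↔ V = expectedReward r f g + γ • transMatrix p f g *ᵥ V := by
  simp only [IsValue, funext_iff, Pi.add_apply, Pi.smul_apply, smul_eq_mul, expectedReward,
    transMatrix, Matrix.mulVec, dotProduct, Matrix.of_apply, mul_sum, mul_add, sum_add_distrib]
  refine forall_congr' fun s => Eq.congr_right (congrArg _ ?_)
  simp only [sum_mul, mul_sum]
  conv_rhs => rw [sum_comm]
  refine sum_congr rfl fun a _ => ?_
  conv_rhs => rw [sum_comm]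
  exact sum_congr rfl fun b _ => sum_congr rfl fun s' _ => by ring

theorem transMatrix_mem_rowStochastic [DecidableEq S] (hp : ∀ s a b, IsDist (p s a b))
    (hf : IsPol f) (hg : IsPol g) : transMatrix p f g ∈ Matrix.rowStochastic ℝ S := by
  refine Matrix.mem_rowStochastic_iff_sum.2 ⟨fun s s' => ?_, fun s => ?_⟩
  · exact sum_nonneg fun a _ => sum_nonneg fun b _ =>
      mul_nonneg (mul_nonneg ((hf s).1 a) ((hg s).1 b)) ((hp s a b).1 s')
  · simp only [transMatrix, Matrix.of_apply]
    rw [sum_comm]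
    refine (sum_congr rfl fun a _ => ?_).trans (hf s).2
    rw [sum_comm]
    simp_rw [← mul_sum, (hp _ _ _).2, mul_one, ← mul_sum, (hg s).2, mul_one]

theorem IsValue.eq_inv_mulVec [DecidableEq S] {V : S → ℝ} (hV : IsValue p r γ f g V)
    (hp : ∀ s a b, IsDist (p s a b)) (hγ0 : 0 ≤ γ) (hγ1 : γ < 1) (hf : IsPol f) (hg : IsPol g) :
    V = (1 - γ • transMatrix p f g)⁻¹ *ᵥ expectedReward r f g := by
  have hunit := Matrix.isUnit_one_sub_smul_of_mem_rowStochastic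
    (transMatrix_mem_rowStochastic hp hf hg) hγ0 hγ1
  have hsolve : (1 - γ • transMatrix p f g) *ᵥ V = expectedReward r f g := by
    rw [Matrix.sub_mulVec, Matrix.one_mulVec, Matrix.smul_mulVec, sub_eq_iff_eq_add]
    exact isValue_iff.1 hV
  rw [← hsolve, Matrix.mulVec_mulVec,
    Matrix.nonsing_inv_mul _ ((Matrix.isUnit_iff_isUnit_det _).1 hunit), Matrix.one_mulVec]

theorem continuousOn_of_isValue (hp : ∀ s a b, IsDist (p s a b)) (hγ0 : 0 ≤ γ) (hγ1 : γ < 1)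
    (hg : IsPol g) {V : (S → A → ℝ) → S → ℝ} (hV : ∀ f, IsPol f → IsValue p r γ f g (V f)) :
    ContinuousOn V {f | IsPol f} := by
  classical
  have hP : Continuous fun f => 1 - γ • transMatrix p f g := by
    unfold transMatrix
    fun_prop
  have hr : Continuous fun f => expectedReward r f g := by
    unfold expectedReward
    fun_prop
  refine ContinuousOn.congr (fun f hf => ?_) fun f hf =>
    IsValue.eq_inv_mulVec (hV f hf) hp hγ0 hγ1 hf hg
  have hdet : (1 - γ • transMatrix p f g).det ≠ 0 := ((Matrix.isUnit_iff_isUnit_det _).1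
      (Matrix.isUnit_one_sub_smul_of_mem_rowStochastic
        (transMatrix_mem_rowStochastic hp hf hg) hγ0 hγ1)).ne_zero
  have hinv : ContinuousAt (fun f => (1 - γ • transMatrix p f g)⁻¹) f := by
    refine (continuousAt_matrix_inv _ ?_).comp hP.continuousAt
    rw [Ring.inverse_eq_inv']
    exact continuousAt_inv₀ hdet
  exact ((continuous_fst.matrix_mulVec continuous_snd).continuousAt.comp
    (hinv.prodMk hr.continuousAt)).continuousWithinAt

end Bellman

namespace Setup

variable {S A B : Type*} [Fintype S] [Fintype A] [Fintype B] [DecidableEq B] (M : Setup S A B)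

theorem continuousOn_VB {g : S → B → ℝ} (hg : IsPol g) :
    ContinuousOn (fun f => M.VB f g) {f | IsPol f} :=
  continuousOn_of_isValue M.hp M.hgB0 M.hgB1 hg fun f hf => M.hVB f g hf hg

theorem isClosed_setOf_Rstar_eq (b : S → B) :
    IsClosed {x : {f : S → A → ℝ // IsPol f} | M.Rstar x = b} := by
  have hset : {x : {f : S → A → ℝ // IsPol f} | M.Rstar x = b} =
      {x : {f : S → A → ℝ // IsPol f} | ∀ g, IsPol g → ∀ s, M.VB x g s ≤ M.VB x (det b) s} := by
    ext x
    exact ⟨by rintro rfl; exact M.hRstar x x.2, fun h => (M.hRstarU x x.2 b h).symm⟩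
  have hVB : ∀ {g : S → B → ℝ}, IsPol g → ∀ s,
      Continuous fun x : {f : S → A → ℝ // IsPol f} => M.VB x g s := fun hg s =>
    (continuous_apply s).comp (M.continuousOn_VB hg).domRestrict
  rw [hset]
  simp only [Set.ofPred_forall]
  exact isClosed_iInter fun g => isClosed_iInter fun hg => isClosed_iInter fun s =>
    isClosed_le (hVB hg s) (hVB (isPol_det b) s)

theorem Rstar_eq {f f' : S → A → ℝ} (hf : IsPol f) (hf' : IsPol f') : M.Rstar f = M.Rstar f' := by
  have : PreconnectedSpace {f : S → A → ℝ // IsPol f} :=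
    Subtype.preconnectedSpace convex_setOf_isPol.isPreconnected
  exact PreconnectedSpace.constant_of_isClosed_preimage_singleton
    (φ := fun x : {f : S → A → ℝ // IsPol f} => M.Rstar x) M.isClosed_setOf_Rstar_eq
    ⟨f, hf⟩ ⟨f', hf'⟩

variable {M}

theorem VAdag_eq_rAf (h0 : M.gA = 0) {f : S → A → ℝ} (hf : IsPol f) (s : S) :
    M.VAdag f s = M.rAf f s (M.Rstar f s) := by
  rw [VAdag, M.hVA f _ hf (isPol_det _) s, h0]
  simp [rAf, det]

theorem Q_eq_VAdag (h0 : M.gA = 0) (f' : S → A → ℝ) {f : S → A → ℝ} (hf : IsPol f) :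
    M.Q f' f = M.VAdag f := by
  funext s
  rw [VAdag_eq_rAf h0 hf, Q, h0, zero_mul, add_zero]

theorem isCompact_Vset (h0 : M.gA = 0) : IsCompact M.Vset := by
  by_cases hpol : ∃ f₀ : S → A → ℝ, IsPol f₀
  · obtain ⟨f₀, hf₀⟩ := hpol
    have himage : M.Vset = (fun f s => M.rAf f s (M.Rstar f₀ s)) '' {f | IsPol f} := by
      ext v
      refine exists_congr fun f => and_congr_right fun hf => ?_
      rw [eq_comm, funext_iff, funext_iff]
      simp only [VAdag_eq_rAf h0 hf, M.Rstar_eq hf hf₀]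
    rw [himage]
    exact isCompact_setOf_isPol.image (by unfold rAf; fun_prop)
  · have hempty : M.Vset = ∅ := Set.eq_empty_of_forall_notMem fun _ ⟨f, hf, _⟩ => hpol ⟨f, hf⟩
    rw [hempty]
    exact isCompact_empty

theorem mem_Wge_iff (h0 : M.gA = 0) {f' f : S → A → ℝ} :
    f ∈ M.Wge f' ↔ IsPol f ∧ M.VAdag f' ≤ M.VAdag f := by
  refine and_congr_right fun hf => ?_
  rw [Q_eq_VAdag h0 f' hf]
  rfl

theorem le_of_mem_Weps (h0 : M.gA = 0) {L : (S → ℝ) → ℝ} (hL : Continuous L) {ε : ℝ}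
    (hε : ε ≤ 1) {f' f h : S → A → ℝ} (hf : f ∈ M.Weps L ε f') (hh : h ∈ M.Wge f') :
    (1 - ε) * (L (M.VAdag h) - L (M.VAdag f')) ≤ L (M.VAdag f) - L (M.VAdag f') := by
  obtain ⟨C, hC⟩ := (isCompact_Vset h0).bddAbove_image hL.continuousOn
  have hbdd : BddAbove ((fun h => L (M.Q f' h) - L (M.VAdag f')) '' M.Wge f') := by
    refine ⟨C - L (M.VAdag f'), ?_⟩
    rintro _ ⟨h, hh, rfl⟩
    have : L (M.Q f' h) ≤ C := by
      rw [Q_eq_VAdag h0 f' hh.1]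
      exact hC ⟨_, ⟨h, hh.1, rfl⟩, rfl⟩
    exact sub_le_sub_right this _
  calc (1 - ε) * (L (M.VAdag h) - L (M.VAdag f'))
      = (1 - ε) * (L (M.Q f' h) - L (M.VAdag f')) := by rw [Q_eq_VAdag h0 f' hh.1]
    _ ≤ (1 - ε) * sSup ((fun h => L (M.Q f' h) - L (M.VAdag f')) '' M.Wge f') :=
      mul_le_mul_of_nonneg_left (le_csSup hbdd ⟨h, hh, rfl⟩) (sub_nonneg.2 hε)
    _ ≤ L (M.Q f' f) - L (M.VAdag f') := hf.2
    _ = L (M.VAdag f) - L (M.VAdag f') := by rw [Q_eq_VAdag h0 f' hf.1.1]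

end Setup

theorem stmt18_general {S A B : Type*} [Fintype S] [Fintype A] [Fintype B]
    [DecidableEq B]
    (M : Setup S A B)
    (L : (S → ℝ) → ℝ) (hLc : Continuous L)
    (hLp : ∀ v w : S → ℝ, SDom v w → L w < L v)
    (ε : ℝ) (hε1 : ε < 1)
    (f : ℕ → S → A → ℝ) (hf0 : IsPol (f 0))
    (hstep : ∀ t, f (t + 1) ∈ M.Weps L ε (f t))
    (hmyopic : M.gA = 0)
    (vinf : S → ℝ)
    (hvinf : Filter.Tendsto (fun t => M.VAdag (f t)) Filter.atTop (nhds vinf)) :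
    vinf ∈ M.PV := by
  have hpol : ∀ t, IsPol (f t) := fun
    | 0 => hf0
    | t + 1 => (hstep t).1.1
  have hmono : Monotone fun t => M.VAdag (f t) :=
    monotone_nat_of_le_succ fun t => ((Setup.mem_Wge_iff hmyopic).1 (hstep t).1).2
  refine ⟨mem_closure_of_tendsto hvinf (Eventually.of_forall fun t => ⟨f t, hpol t, rfl⟩), ?_⟩
  rintro ⟨w, hw, hdom⟩
  rw [(Setup.isCompact_Vset hmyopic).isClosed.closure_eq] at hw
  obtain ⟨h, hh, rfl⟩ := hw
  refine not_sdom_of_tendsto_of_improvement hLc hLp hε1 hmono hvinf (fun t ht => ?_) hdom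
  exact Setup.le_of_mem_Weps hmyopic hLc hε1.le (hstep t) ((Setup.mem_Wge_iff hmyopic).2 ⟨hh, ht⟩)

theorem stmt18 {S A B : Type*} [Fintype S] [Fintype A] [Fintype B]
    [Nonempty S] [Nonempty A] [Nonempty B] [DecidableEq B]
    (M : Setup S A B)
    (L : (S → ℝ) → ℝ) (hLc : Continuous L)
    (hLp : ∀ v w : S → ℝ, SDom v w → L w < L v)
    (ε : ℝ) (hε0 : 0 ≤ ε) (hε1 : ε < 1)
    (f : ℕ → S → A → ℝ) (hf0 : IsPol (f 0))
    (hstep : ∀ t, f (t + 1) ∈ M.Weps L ε (f t))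
    (hmyopic : M.gA = 0)
    (vinf : S → ℝ)
    (hvinf : Filter.Tendsto (fun t => M.VAdag (f t)) Filter.atTop (nhds vinf)) :
    vinf ∈ M.PV :=
  stmt18_general M L hLc hLp ε hε1 f hf0 hstep hmyopic vinf hvinf
end

section
/- Consider the following two-state SSG: S = {s1, s2}, A = {a1, a2}, B = {b1, b2}, with deterministic transitions and rewards given, for each state s ∈ S (with s̄ denoting the other state), by: action pair (a1, b1) keeps the state at s with leader reward 1 and follower reward 0; action pair (a1, b2) moves the state to s̄ with leader reward 0 and follower reward x; action pairs (a2, b) for any b ∈ B move the state to s̄ with leader reward 0 and follower reward −y. Assume x > 0, y > 0, γ_B·y > x, and γ_A, γ_B ∈ [0,1). Then: (1) for each i ∈ {1,2}, the supremum over all leader policies f and all best responses g ∈ R_B^*(f) of V_A^{fg}(s_i) equals 1/(1 − γ_A); and (2) there is no leader policy f and best response g ∈ R_B^*(f) with V_A^{fg}(s1) = V_A^{fg}(s2) = 1/(1 − γ_A). Consequently, no SSE policy exists in this game under any tie-breaking rule for the follower's best response. -/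
open Finset

lemma pol_nonneg {f : Bool → Bool → ℝ} (hf : IsPol f) (s a : Bool) : 0 ≤ f s a := (hf s).1 a

lemma pol_sum {f : Bool → Bool → ℝ} (hf : IsPol f) (s : Bool) : f s true + f s false = 1 := by
  have := (hf s).2; rwa [Fintype.sum_bool] at this

lemma isPol_det_s19 (g : Bool → Bool) : IsPol (det g) := by
  intro s
  constructor
  · intro a; unfold det; split <;> norm_num
  · rw [Fintype.sum_bool]; unfold det; cases g s <;> simp

lemma expandV (p : Bool → Bool → Bool → Bool → ℝ)
    (hp : ∀ s a b s', p s a b s' =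
      if a = true ∧ b = true then (if s' = s then (1 : ℝ) else 0)
      else (if s' = !s then (1 : ℝ) else 0))
    (r : Bool → Bool → Bool → ℝ) (γ : ℝ) (f g : Bool → Bool → ℝ) (V : Bool → ℝ)
    (hV : IsValue p r γ f g V) (s : Bool) :
    V s = f s true * g s true * (r s true true + γ * V s)
        + f s true * g s false * (r s true false + γ * V (!s))
        + f s false * g s true * (r s false true + γ * V (!s))
        + f s false * g s false * (r s false false + γ * V (!s)) := by
  conv_lhs => rw [hV s]
  simp only [Fintype.sum_bool, hp]
  cases s <;> norm_num <;> ring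

lemma valueLe (γ : ℝ) (hγ0 : 0 ≤ γ) (hγ1 : γ < 1)
    (p : Bool → Bool → Bool → Bool → ℝ)
    (hp : ∀ s a b s', p s a b s' =
      if a = true ∧ b = true then (if s' = s then (1 : ℝ) else 0)
      else (if s' = !s then (1 : ℝ) else 0))
    (r : Bool → Bool → Bool → ℝ) (hr : ∀ s a b, r s a b ≤ 1)
    (f g : Bool → Bool → ℝ) (V : Bool → ℝ)
    (hf : IsPol f) (hg : IsPol g) (hV : IsValue p r γ f g V) (s : Bool) :
    V s ≤ 1 / (1 - γ) := by
  set M := max (V true) (V false) with hM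
  have hVb : ∀ b, V b ≤ M := by intro b; cases b; exacts [le_max_right _ _, le_max_left _ _]
  have hkey : ∀ s, V s ≤ 1 + γ * M := by
    intro s
    have he := expandV p hp r γ f g V hV s
    have w1 : 0 ≤ f s true * g s true := mul_nonneg (pol_nonneg hf s true) (pol_nonneg hg s true)
    have w2 : 0 ≤ f s true * g s false := mul_nonneg (pol_nonneg hf s true) (pol_nonneg hg s false)
    have w3 : 0 ≤ f s false * g s true := mul_nonneg (pol_nonneg hf s false) (pol_nonneg hg s true)
    have w4 : 0 ≤ f s false * g s false := mul_nonneg (pol_nonneg hf s false) (pol_nonneg hg s false)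
    have hb1 : r s true true + γ * V s ≤ 1 + γ * M := by
      have := hr s true true
      nlinarith [mul_le_mul_of_nonneg_left (hVb s) hγ0]
    have hb2 : r s true false + γ * V (!s) ≤ 1 + γ * M := by
      have := hr s true false
      nlinarith [mul_le_mul_of_nonneg_left (hVb (!s)) hγ0]
    have hb3 : r s false true + γ * V (!s) ≤ 1 + γ * M := by
      have := hr s false true
      nlinarith [mul_le_mul_of_nonneg_left (hVb (!s)) hγ0]
    have hb4 : r s false false + γ * V (!s) ≤ 1 + γ * M := by
      have := hr s false false
      nlinarith [mul_le_mul_of_nonneg_left (hVb (!s)) hγ0]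
    have t1 := mul_le_mul_of_nonneg_left hb1 w1
    have t2 := mul_le_mul_of_nonneg_left hb2 w2
    have t3 := mul_le_mul_of_nonneg_left hb3 w3
    have t4 := mul_le_mul_of_nonneg_left hb4 w4
    have hw : f s true * g s true + f s true * g s false
        + f s false * g s true + f s false * g s false = 1 := by
      linear_combination (g s true + g s false) * pol_sum hf s + pol_sum hg s
    have hsum : f s true * g s true * (1 + γ * M) + f s true * g s false * (1 + γ * M)
        + f s false * g s true * (1 + γ * M) + f s false * g s false * (1 + γ * M)
        = 1 + γ * M := by linear_combination (1 + γ * M) * hw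
    linarith [he, t1, t2, t3, t4, hsum]
  have hM1 : M ≤ 1 + γ * M := max_le (hkey true) (hkey false)
  have hMle : M ≤ 1 / (1 - γ) := by
    rw [le_div_iff₀ (by linarith : (0:ℝ) < 1 - γ)]
    nlinarith
  exact (hVb s).trans hMle

lemma followerLe (x y γB : ℝ) (hx : 0 < x) (hxy : x < γB * y) (hγB0 : 0 ≤ γB) (hγB1 : γB < 1)
    (p : Bool → Bool → Bool → Bool → ℝ)
    (hp : ∀ s a b s', p s a b s' =
      if a = true ∧ b = true then (if s' = s then (1 : ℝ) else 0)
      else (if s' = !s then (1 : ℝ) else 0))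
    (rB : Bool → Bool → Bool → ℝ)
    (hrB : ∀ s a b, rB s a b = if a = true then (if b = true then (0 : ℝ) else x) else -y)
    (f g' : Bool → Bool → ℝ) (V : Bool → ℝ) (s0 : Bool)
    (hf : IsPol f) (hg' : IsPol g') (hf1 : f s0 true = 1) (hf0 : f (!s0) true = 0)
    (hV : IsValue p rB γB f g' V) :
    V s0 ≤ 0 ∧ V (!s0) ≤ -y ∧ (g' s0 true = 0 → V s0 < 0) := by
  have hfs0 : f s0 false = 0 := by have := pol_sum hf s0; linarith
  have hf0' : f (!s0) false = 1 := by have := pol_sum hf (!s0); linarith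
  have hg1 := pol_sum hg' s0
  have hg2 := pol_sum hg' (!s0)
  have r00 : rB s0 true true = 0 := by simp [hrB]
  have r0x : rB s0 true false = x := by simp [hrB]
  have rya : rB s0 false true = -y := by simp [hrB]
  have ryb : rB s0 false false = -y := by simp [hrB]
  have r1a : rB (!s0) false true = -y := by simp [hrB]
  have r1b : rB (!s0) false false = -y := by simp [hrB]
  have he1 := expandV p hp rB γB f g' V hV s0
  have he2 := expandV p hp rB γB f g' V hV (!s0)
  rw [hf1, hfs0, r00, r0x, rya, ryb] at he1
  rw [hf0, hf0', Bool.not_not, r1a, r1b] at he2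
  have key : V s0 * (1 - g' s0 true * γB - g' s0 false * γB^2)
      = g' s0 false * (x - γB * y) := by
    linear_combination he1 + g' s0 false * γB * he2
      + g' s0 false * γB * (-y + γB * V s0) * hg2
  have hD : 0 < 1 - g' s0 true * γB - g' s0 false * γB^2 := by
    nlinarith [pol_nonneg hg' s0 true, pol_nonneg hg' s0 false,
      mul_nonneg (pol_nonneg hg' s0 false) (mul_nonneg hγB0 (by linarith : (0:ℝ) ≤ 1 - γB))]
  have hu : V s0 ≤ 0 := by
    by_contra h
    push_neg at h
    nlinarith [mul_pos h hD, pol_nonneg hg' s0 false]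
  have hw : V (!s0) = -y + γB * V s0 := by
    linear_combination he2 + (-y + γB * V s0) * hg2
  refine ⟨hu, ?_, ?_⟩
  · nlinarith [mul_nonneg hγB0 (neg_nonneg.2 hu)]
  · intro ht
    have htf : g' s0 false = 1 := by linarith
    rw [ht, htf] at key
    have hkey2 : V s0 * (1 - γB^2) = x - γB * y := by linear_combination key
    by_contra h
    push_neg at h
    have hnn : (0:ℝ) ≤ 1 - γB^2 := by nlinarith
    nlinarith [hkey2, mul_nonneg h hnn]

lemma vbZero (x y γB : ℝ) (hγB1 : γB < 1)
    (p : Bool → Bool → Bool → Bool → ℝ)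
    (hp : ∀ s a b s', p s a b s' =
      if a = true ∧ b = true then (if s' = s then (1 : ℝ) else 0)
      else (if s' = !s then (1 : ℝ) else 0))
    (rB : Bool → Bool → Bool → ℝ)
    (hrB : ∀ s a b, rB s a b = if a = true then (if b = true then (0 : ℝ) else x) else -y)
    (f : Bool → Bool → ℝ) (V : Bool → ℝ) (s0 : Bool)
    (hf : IsPol f) (hf1 : f s0 true = 1) (hf0 : f (!s0) true = 0)
    (hV : IsValue p rB γB f (det (fun _ => true)) V) :
    V s0 = 0 ∧ V (!s0) = -y := by
  have hfs0 : f s0 false = 0 := by have := pol_sum hf s0; linarith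
  have hf0' : f (!s0) false = 1 := by have := pol_sum hf (!s0); linarith
  have dt : ∀ s : Bool, det (fun _ => true) s true = 1 := by intro s; simp [det]
  have df : ∀ s : Bool, det (fun _ => true) s false = 0 := by intro s; simp [det]
  have r00 : rB s0 true true = 0 := by simp [hrB]
  have r1a : rB (!s0) false true = -y := by simp [hrB]
  have he1 := expandV p hp rB γB f (det (fun _ => true)) V hV s0
  have he2 := expandV p hp rB γB f (det (fun _ => true)) V hV (!s0)
  rw [hf1, hfs0, dt, df, r00] at he1
  rw [hf0, hf0', Bool.not_not, dt, df, r1a] at he2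
  have h0 : V s0 = 0 := by
    have : V s0 * (1 - γB) = 0 := by linear_combination he1
    have h1 : (1:ℝ) - γB ≠ 0 := by linarith
    exact (mul_eq_zero.1 this).resolve_right h1
  refine ⟨h0, ?_⟩
  rw [h0] at he2
  linarith [he2]

lemma vaTop (γA : ℝ) (hγA1 : γA < 1)
    (p : Bool → Bool → Bool → Bool → ℝ)
    (hp : ∀ s a b s', p s a b s' =
      if a = true ∧ b = true then (if s' = s then (1 : ℝ) else 0)
      else (if s' = !s then (1 : ℝ) else 0))
    (rA : Bool → Bool → Bool → ℝ)
    (hrA : ∀ s a b, rA s a b = if a = true ∧ b = true then (1 : ℝ) else 0)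
    (f : Bool → Bool → ℝ) (g : Bool → Bool) (V : Bool → ℝ) (s0 : Bool)
    (hf : IsPol f) (hf1 : f s0 true = 1) (hg : g s0 = true)
    (hV : IsValue p rA γA f (det g) V) :
    V s0 = 1 / (1 - γA) := by
  have hfs0 : f s0 false = 0 := by have := pol_sum hf s0; linarith
  have dt : det g s0 true = 1 := by simp [det, hg]
  have df : det g s0 false = 0 := by simp [det, hg]
  have r11 : rA s0 true true = 1 := by simp [hrA]
  have he := expandV p hp rA γA f (det g) V hV s0
  rw [hf1, hfs0, dt, df, r11] at he
  have hpos : (0:ℝ) < 1 - γA := by linarith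
  field_simp
  linarith [he]

theorem stmt19
    (x y γA γB : ℝ) (hx : 0 < x) (hy : 0 < y) (hxy : x < γB * y)
    (hγA0 : 0 ≤ γA) (hγA1 : γA < 1) (hγB0 : 0 ≤ γB) (hγB1 : γB < 1)
    -- the deterministic dynamics: (a1,b1) stays, anything else moves to the other state
    (p : Bool → Bool → Bool → Bool → ℝ)
    (hp : ∀ s a b s', p s a b s' =
      if a = true ∧ b = true then (if s' = s then (1 : ℝ) else 0)
      else (if s' = !s then (1 : ℝ) else 0))
    -- the rewards: (a1,b1) gives (1,0); (a1,b2) gives (0,x); (a2,*) gives (0,-y)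
    (rA rB : Bool → Bool → Bool → ℝ)
    (hrA : ∀ s a b, rA s a b = if a = true ∧ b = true then (1 : ℝ) else 0)
    (hrB : ∀ s a b, rB s a b =
      if a = true then (if b = true then (0 : ℝ) else x) else -y)
    -- the value functions, characterized by the Bellman expectation equations
    (VA VB : (Bool → Bool → ℝ) → (Bool → Bool → ℝ) → Bool → ℝ)
    (hVA : ∀ f g, IsPol f → IsPol g → IsValue p rA γA f g (VA f g))
    (hVB : ∀ f g, IsPol f → IsPol g → IsValue p rB γB f g (VB f g))
    -- `BR f g`: the deterministic follower policy `g` is a best response to `f`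
    (BR : (Bool → Bool → ℝ) → (Bool → Bool) → Prop)
    (hBRdef : ∀ f g, BR f g ↔ ∀ g', IsPol g' → ∀ s, VB f g' s ≤ VB f (det g) s) :
    -- (1) per-state supremum of the leader's value over policies & best responses
    (∀ s : Bool,
      sSup {z | ∃ f g, IsPol f ∧ BR f g ∧ z = VA f (det g) s} = 1 / (1 - γA)) ∧
    -- (2) no pair attains the value 1/(1-γA) at both states simultaneously
    (¬ ∃ f g, IsPol f ∧ BR f g ∧ ∀ s, VA f (det g) s = 1 / (1 - γA)) ∧
    -- (3) consequently, for every tie-breaking rule R there is no SSE policy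
    (∀ R : (Bool → Bool → ℝ) → Bool → Bool,
      (∀ f, IsPol f → BR f (R f)) →
      ¬ ∃ fstar, IsPol fstar ∧ ∀ s : Bool,
        VA fstar (det (R fstar)) s =
          sSup {z | ∃ f, IsPol f ∧ z = VA f (det (R f)) s}) := by
  have hApos : (0:ℝ) < 1 - γA := by linarith
  have hAne : (1:ℝ) - γA ≠ 0 := ne_of_gt hApos
  set K := 1 / (1 - γA) with hKdef
  have hK : K * (1 - γA) = 1 := one_div_mul_cancel hAne
  have hrAle : ∀ s a b, rA s a b ≤ 1 := by intro s a b; rw [hrA]; split <;> norm_num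
  have hub : ∀ f g, IsPol f → ∀ s, VA f (det g) s ≤ K := fun f g hf s =>
    valueLe γA hγA0 hγA1 p hp rA hrAle f (det g) _ hf (isPol_det_s19 g)
      (hVA f (det g) hf (isPol_det_s19 g)) s
  -- the per-state witness leader policy
  have hfwPol : ∀ s0 : Bool, IsPol (det (fun u => u == s0)) := fun s0 => isPol_det_s19 _
  have hfw1 : ∀ s0 : Bool, det (fun u => u == s0) s0 true = 1 := by
    intro s0; simp [det]
  have hfw0 : ∀ s0 : Bool, det (fun u => u == s0) (!s0) true = 0 := by
    intro s0; cases s0 <;> simp [det]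
  have hBRw : ∀ s0 : Bool, BR (det (fun u => u == s0)) (fun _ => true) := by
    intro s0
    rw [hBRdef]
    intro g' hg' s
    have hZ := vbZero x y γB hγB1 p hp rB hrB _ _ s0 (hfwPol s0) (hfw1 s0) (hfw0 s0)
      (hVB _ _ (hfwPol s0) (isPol_det_s19 _))
    have hL := followerLe x y γB hx hxy hγB0 hγB1 p hp rB hrB _ g' _ s0 (hfwPol s0) hg'
      (hfw1 s0) (hfw0 s0) (hVB _ g' (hfwPol s0) hg')
    obtain rfl | rfl : s = s0 ∨ s = !s0 := by cases s <;> cases s0 <;> simp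
    · rw [hZ.1]; exact hL.1
    · rw [hZ.2]; exact hL.2.1
  have hVAw : ∀ s0 : Bool, VA (det (fun u => u == s0)) (det (fun _ => true)) s0 = K :=
    fun s0 => vaTop γA hγA1 p hp rA hrA _ (fun _ => true) _ s0 (hfwPol s0) (hfw1 s0) rfl
      (hVA _ _ (hfwPol s0) (isPol_det_s19 _))
  -- part 1
  have hpart1 : ∀ s : Bool,
      sSup {z | ∃ f g, IsPol f ∧ BR f g ∧ z = VA f (det g) s} = K := by
    intro s
    have hubS : ∀ z ∈ {z | ∃ f g, IsPol f ∧ BR f g ∧ z = VA f (det g) s}, z ≤ K := by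
      rintro z ⟨f, g, hf, -, rfl⟩; exact hub f g hf s
    have hmem : K ∈ {z | ∃ f g, IsPol f ∧ BR f g ∧ z = VA f (det g) s} :=
      ⟨_, _, hfwPol s, hBRw s, (hVAw s).symm⟩
    exact le_antisymm (csSup_le ⟨K, hmem⟩ hubS) (le_csSup ⟨K, hubS⟩ hmem)
  -- part 2
  have hpart2 : ¬ ∃ f g, IsPol f ∧ BR f g ∧ ∀ s, VA f (det g) s = K := by
    rintro ⟨f, g, hf, hBRg, hall⟩
    have hgPol := isPol_det_s19 g
    have hkey : ∀ s, f s true = 1 ∧ g s = true := by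
      intro s
      have he := expandV p hp rA γA f (det g) _ (hVA f (det g) hf hgPol) s
      rw [hall s, hall (!s)] at he
      have hfs := pol_sum hf s
      have r11 : rA s true true = 1 := by simp [hrA]
      have r10 : rA s true false = 0 := by simp [hrA]
      have r01 : rA s false true = 0 := by simp [hrA]
      have r00 : rA s false false = 0 := by simp [hrA]
      rw [r11, r10, r01, r00] at he
      cases hgs : g s with
      | false =>
        exfalso
        have d1 : det g s true = 0 := by simp [det, hgs]
        have d0 : det g s false = 1 := by simp [det, hgs]
        rw [d1, d0] at he
        have hzero : K * (1 - γA) = 0 := by linear_combination he + γA * K * hfs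
        linarith
      | true =>
        have d1 : det g s true = 1 := by simp [det, hgs]
        have d0 : det g s false = 0 := by simp [det, hgs]
        rw [d1, d0] at he
        have hft : f s true = K * (1 - γA) := by linear_combination -he - γA * K * hfs
        rw [hft, hK]
        exact ⟨rfl, rfl⟩
    have hVB0 : ∀ s, VB f (det g) s = 0 := by
      intro s
      have he := expandV p hp rB γB f (det g) _ (hVB f (det g) hf hgPol) s
      have d1 : det g s true = 1 := by simp [det, (hkey s).2]
      have d0 : det g s false = 0 := by simp [det, (hkey s).2]
      have hfs0 : f s false = 0 := by have := pol_sum hf s; have := (hkey s).1; linarith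
      have r00 : rB s true true = 0 := by simp [hrB]
      rw [d1, d0, (hkey s).1, hfs0, r00] at he
      have hzero : VB f (det g) s * (1 - γB) = 0 := by linear_combination he
      have hne : (1:ℝ) - γB ≠ 0 := by linarith
      exact (mul_eq_zero.1 hzero).resolve_right hne
    -- the deviation g' ≡ b2
    have hgF := isPol_det_s19 (fun _ : Bool => false)
    have hle := (hBRdef f g).1 hBRg (det (fun _ => false)) hgF
    have heqn : ∀ s, VB f (det (fun _ => false)) s
        = x + γB * VB f (det (fun _ => false)) (!s) := by
      intro s
      have he := expandV p hp rB γB f (det (fun _ => false)) _ (hVB f _ hf hgF) s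
      have d1 : det (fun _ : Bool => false) s true = 0 := by simp [det]
      have d0 : det (fun _ : Bool => false) s false = 1 := by simp [det]
      have hfs0 : f s false = 0 := by have := pol_sum hf s; have := (hkey s).1; linarith
      have r0x : rB s true false = x := by simp [hrB]
      rw [d1, d0, (hkey s).1, hfs0, r0x] at he
      linarith [he]
    have hu : VB f (det (fun _ => false)) true ≤ 0 := by
      have := hle true; rw [hVB0 true] at this; exact this
    have h2 : (0:ℝ) ≤ 1 - γB^2 := by nlinarith
    have hueq : VB f (det (fun _ => false)) true * (1 - γB^2) = x * (1 + γB) := by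
      have e1 := heqn true
      have e2 := heqn false
      rw [show (!true) = false from rfl] at e1
      rw [show (!false) = true from rfl] at e2
      linear_combination e1 + γB * e2
    linarith [hueq, mul_nonneg (neg_nonneg.2 hu) h2, mul_nonneg hx.le hγB0]
  refine ⟨hpart1, hpart2, ?_⟩
  -- part 3
  intro R hR
  rintro ⟨fs, hfs, hopt⟩
  have hsup3 : ∀ s : Bool, sSup {z | ∃ f, IsPol f ∧ z = VA f (det (R f)) s} = K := by
    intro s
    have hubS : ∀ z ∈ {z | ∃ f, IsPol f ∧ z = VA f (det (R f)) s}, z ≤ K := by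
      rintro z ⟨f, hf, rfl⟩; exact hub f (R f) hf s
    have hRtrue : R (det (fun u => u == s)) s = true := by
      by_contra h
      simp only [Bool.not_eq_true] at h
      have hBRR := (hBRdef _ _).1 (hR _ (hfwPol s))
      have hZ := vbZero x y γB hγB1 p hp rB hrB _ _ s (hfwPol s) (hfw1 s) (hfw0 s)
        (hVB _ _ (hfwPol s) (isPol_det_s19 _))
      have hL := followerLe x y γB hx hxy hγB0 hγB1 p hp rB hrB _
        (det (R (det (fun u => u == s)))) _ s (hfwPol s) (isPol_det_s19 _)
        (hfw1 s) (hfw0 s) (hVB _ _ (hfwPol s) (isPol_det_s19 _))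
      have hstrict := hL.2.2 (by simp [det, h])
      have hcmp := hBRR (det (fun _ => true)) (isPol_det_s19 _) s
      rw [hZ.1] at hcmp
      linarith
    have hmem : K ∈ {z | ∃ f, IsPol f ∧ z = VA f (det (R f)) s} :=
      ⟨_, hfwPol s, (vaTop γA hγA1 p hp rA hrA _ _ _ s (hfwPol s) (hfw1 s) hRtrue
        (hVA _ _ (hfwPol s) (isPol_det_s19 _))).symm⟩
    exact le_antisymm (csSup_le ⟨K, hmem⟩ hubS) (le_csSup ⟨K, hubS⟩ hmem)
  exact hpart2 ⟨fs, R fs, hfs, hR fs hfs, fun s => (hopt s).trans (hsup3 s)⟩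
end
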